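/- arXiv:0801.2456 — 2 statements merged into one kernel-verified Lean document; each statement's English description precedes it below -/
import Mathlib

section
/- Let α > 1 and C > 0 satisfy C·ζ(α) ≥ 2^α, where ζ(α) = Σ_{k≥1} k^{−α}. Let Λ_{C·^{−α}} be the envelope class of the function f(x) = min(1, C/x^α). Then for every positive integer n, R+(Λ_{C·^{−α}}^n) ≥ n^{1/α}·A(α)·log⌊(C ζ(α))^{1/α}⌋, where A(α) = (1/α)·∫_1^∞ u^{−(1−1/α)}·(1 − e^{−1/(ζ(α) u)}) du. -/
open scoped ENNReal BigOperators

noncomputable section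

/-- `p` is a probability mass function on `α`. -/
def IsPmf {α : Type*} (p : α → ℝ) : Prop := (∀ a, 0 ≤ p a) ∧ HasSum p 1

/-- The `n`-fold product probability mass function. -/
def prodPmf {α : Type*} (p : α → ℝ) (n : ℕ) : (Fin n → α) → ℝ :=
  fun x => ∏ i, p (x i)

/-- base-2 logarithm of the ratio `a / b`, valued in `[0,∞]`:
it is `⊤` when `b = 0 < a`, and clipped at `0` from below (which does not affect
the suprema defining minimax regret, which are always nonnegative). -/
def regretTerm (a b : ℝ) : ℝ≥0∞ :=
  if a ≤ 0 then 0 else if b ≤ 0 then ⊤ else ENNReal.ofReal (Real.logb 2 (a / b))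

/-- Minimax regret (base 2) of the class `Λ` for word length `n`, valued in `[0,∞]`. -/
def minimaxRegret {α : Type*} (Λ : Set (α → ℝ)) (n : ℕ) : ℝ≥0∞ :=
  ⨅ (Q : (Fin n → α) → ℝ) (_ : IsPmf Q),
    ⨆ (x : Fin n → α), ⨆ P ∈ Λ, regretTerm (prodPmf P n x) (Q x)

/- Kullback-Leibler divergence `D(p‖q)` in base 2, valued in `[0,∞]`.
It is `⊤` unless `q` dominates `p`; otherwise it is computed through the
pointwise-nonnegative decomposition `p log(p/q) + q - p` (summing to
`Σ p log(p/q)` since `Σ p = Σ q = 1`), converted from nats to bits. -/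
open Classical in
def klDiv2 {α : Type*} (p q : α → ℝ) : ℝ≥0∞ :=
  if ∃ a, q a = 0 ∧ 0 < p a then ⊤
  else (∑' a, ENNReal.ofReal (p a * Real.log (p a / q a) + q a - p a)) /
       ENNReal.ofReal (Real.log 2)

/-- Minimax redundancy (base 2) of the class `Λ` for word length `n`, valued in `[0,∞]`. -/
def minimaxRedundancy {α : Type*} (Λ : Set (α → ℝ)) (n : ℕ) : ℝ≥0∞ :=
  ⨅ (Q : (Fin n → α) → ℝ) (_ : IsPmf Q), ⨆ P ∈ Λ, klDiv2 (prodPmf P n) Q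

/-- The envelope class defined by the envelope function `f`. -/
def envClass (f : ℕ+ → ℝ) : Set (ℕ+ → ℝ) := {P | IsPmf P ∧ ∀ k, P k ≤ f k}

/-!
Let `m = ⌊(C ζ)^(1/α)⌋` and `q j = (j + 1)^(-α) / ζ`. Group the symbols into consecutive blocks
of `m`. For `θ : Fin J → Fin m`, the source putting mass `q j` on the `θ j`-th symbol of block `j`
lies under the envelope because `m ^ α ≤ C ζ`. The minimax redundancy is at least the average
redundancy over these `m ^ J` sources, and that average is smallest against their uniform
mixture. Against the mixture, a word loses a factor `m` for each of the first `J` blocks it hits,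
so the redundancy is at least `log m` times the expected number of hit blocks,
`∑ j < J, (1 - (1 - q j)^n) ≥ ∑ j < J, (1 - exp (-n q j))`. An integral comparison and the
substitution `u = t^α / n` turn this sum into `n^(1/α) A` as `J → ∞`.
-/

open Finset Real

section Pmf

variable {α β ι : Type*}

theorem ENNReal.tsum_pi_prod_eq_pow (f : α → ℝ≥0∞) (n : ℕ) :
    ∑' x : Fin n → α, ∏ i, f (x i) = (∑' a, f a) ^ n := by
  induction n with
  | zero => simp
  | succ n ih =>
    rw [← (Fin.consEquiv fun _ => α).tsum_eq, ENNReal.tsum_prod', pow_succ', ← ih,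
      ← ENNReal.tsum_mul_right]
    refine tsum_congr fun a => ?_
    rw [← ENNReal.tsum_mul_left]
    exact tsum_congr fun x => by simp [Fin.prod_univ_succ]

theorem isPmf_iff {p : α → ℝ} :
    IsPmf p ↔ (∀ a, 0 ≤ p a) ∧ ∑' a, ENNReal.ofReal (p a) = 1 := by
  refine and_congr_right fun hp => ⟨fun h => ?_, fun h => ?_⟩
  · rw [← ENNReal.ofReal_tsum_of_nonneg hp h.summable, h.tsum_eq, ENNReal.ofReal_one]
  · have hs : Summable p := by
      simpa [ENNReal.toReal_ofReal (hp _)] using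
        ENNReal.summable_toReal (f := fun a => ENNReal.ofReal (p a)) (by simp [h])
    rwa [← ENNReal.ofReal_tsum_of_nonneg hp hs, ENNReal.ofReal_eq_one, ← hs.hasSum_iff] at h

theorem IsPmf.tsum_ofReal {p : α → ℝ} (hp : IsPmf p) : ∑' a, ENNReal.ofReal (p a) = 1 :=
  (isPmf_iff.1 hp).2

theorem prodPmf_nonneg {p : α → ℝ} (hp : ∀ a, 0 ≤ p a) (n : ℕ) (x : Fin n → α) :
    0 ≤ prodPmf p n x :=
  prod_nonneg fun i _ => hp (x i)

theorem IsPmf.prodPmf {p : α → ℝ} (hp : IsPmf p) (n : ℕ) : IsPmf (prodPmf p n) := by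
  refine isPmf_iff.2 ⟨prodPmf_nonneg hp.1 n, ?_⟩
  simp_rw [_root_.prodPmf, ENNReal.ofReal_prod_of_nonneg fun i _ => hp.1 _]
  rw [ENNReal.tsum_pi_prod_eq_pow (fun a => ENNReal.ofReal (p a)), hp.tsum_ofReal, one_pow]

def mixture [Fintype ι] (p : ι → β → ℝ) (x : β) : ℝ :=
  (∑ i, p i x) / Fintype.card ι

theorem mixture_nonneg [Fintype ι] {p : ι → β → ℝ} (hp : ∀ i x, 0 ≤ p i x)
    (x : β) : 0 ≤ mixture p x :=
  div_nonneg (sum_nonneg fun i _ => hp i x) (Nat.cast_nonneg _)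

theorem mixture_pos [Fintype ι] {p : ι → β → ℝ} (hp : ∀ i x, 0 ≤ p i x) {i : ι}
    {x : β} (h : 0 < p i x) : 0 < mixture p x :=
  div_pos (h.trans_le (single_le_sum (fun j _ => hp j x) (mem_univ i)))
    (Nat.cast_pos.2 (Fintype.card_pos_iff.2 ⟨i⟩))

theorem IsPmf.mixture [Fintype ι] [Nonempty ι] {p : ι → β → ℝ}
    (hp : ∀ i, IsPmf (p i)) : IsPmf (mixture p) := by
  refine ⟨mixture_nonneg fun i => (hp i).1, ?_⟩
  have := (hasSum_sum (s := univ) fun i _ => (hp i).2).div_const (Fintype.card ι : ℝ)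
  rwa [sum_const, card_univ, nsmul_one, div_self (by positivity)] at this

theorem ENNReal.tsum_indicator_exists_mem {p : α → ℝ≥0∞} (hp : ∑' a, p a = 1) (S : Set α)
    (n : ℕ) :
    ∑' x : Fin n → α, {x | ∃ i, x i ∈ S}.indicator (fun x => ∏ i, p (x i)) x =
      1 - (1 - ∑' a, S.indicator p a) ^ n := by
  have hS : ∑' a, S.indicator p a + ∑' a, Sᶜ.indicator p a = 1 := by
    rw [← ENNReal.tsum_add, ← hp]
    exact tsum_congr fun a => Set.indicator_self_add_compl_apply S p a
  have hmiss (x : Fin n → α) :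
      {x | ∃ i, x i ∈ S}ᶜ.indicator (fun x => ∏ i, p (x i)) x = ∏ i, Sᶜ.indicator p (x i) := by
    by_cases hx : ∃ i, x i ∈ S
    · obtain ⟨i, hi⟩ := hx
      rw [Set.indicator_of_notMem (by simpa using ⟨i, hi⟩)]
      exact (prod_eq_zero (mem_univ i)
        (Set.indicator_of_notMem (s := Sᶜ) (by simpa using hi) p)).symm
    · simp only [not_exists] at hx
      rw [Set.indicator_of_mem (by simpa using hx)]
      exact prod_congr rfl fun i _ => (Set.indicator_of_mem (by simpa using hx i) _).symm
  have htotal : ∑' x : Fin n → α, {x | ∃ i, x i ∈ S}.indicator (fun x => ∏ i, p (x i)) x +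
      (∑' a, Sᶜ.indicator p a) ^ n = 1 := by
    rw [← ENNReal.tsum_pi_prod_eq_pow, ← tsum_congr hmiss, ← ENNReal.tsum_add, ← one_pow n, ← hp,
      ← ENNReal.tsum_pi_prod_eq_pow]
    exact tsum_congr fun x => Set.indicator_self_add_compl_apply _ _ x
  have hS_le : ∑' a, S.indicator p a ≤ 1 := hS ▸ le_self_add
  have hSc_le : ∑' a, Sᶜ.indicator p a ≤ 1 := hS ▸ le_add_self
  rw [ENNReal.sub_eq_of_eq_add_rev (ne_top_of_le_ne_top ENNReal.one_ne_top hS_le) hS.symm]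
  exact ENNReal.eq_sub_of_add_eq
    (ENNReal.pow_ne_top (ne_top_of_le_ne_top ENNReal.one_ne_top hSc_le)) htotal

end Pmf

section KL

variable {α β ι : Type*}

def klTerm (p q : ℝ) : ℝ := p * log (p / q) + q - p

theorem mul_log_div_eq_sub (p : ℝ) {q : ℝ} (hq : q ≠ 0) :
    p * log (p / q) = p * log p - p * log q := by
  rcases eq_or_ne p 0 with rfl | hp
  · simp
  · rw [log_div hp hq, mul_sub]

theorem klTerm_nonneg {p q : ℝ} (hp : 0 ≤ p) (hq : 0 ≤ q) (hpq : 0 < p → 0 < q) :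
    0 ≤ klTerm p q := by
  rcases hp.eq_or_lt with rfl | hp
  · simpa [klTerm] using hq
  have hlog := log_le_sub_one_of_pos (div_pos (hpq hp) hp)
  rw [← neg_neg (log (q / p)), ← log_inv, inv_div] at hlog
  have := mul_le_mul_of_nonneg_left hlog hp.le
  rw [mul_sub, mul_div_cancel₀ _ hp.ne'] at this
  unfold klTerm
  linarith

theorem klDiv2_eq_tsum_klTerm {p q : β → ℝ} (hpq : ∀ x, 0 < p x → 0 < q x) :
    klDiv2 p q = (∑' x, ENNReal.ofReal (klTerm (p x) (q x))) / ENNReal.ofReal (log 2) := by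
  rw [klDiv2, if_neg fun ⟨x, hq, hp⟩ => (hpq x hp).ne' hq]
  rfl

/-- The difference of the two sides is `card ι * klTerm pbar r`, with `pbar` the mixture. -/
theorem sum_klTerm_mixture_le [Fintype ι] [Nonempty ι] {p : ι → ℝ} (hp : ∀ i, 0 ≤ p i)
    {r : ℝ} (hr : 0 ≤ r) (hpr : ∀ i, 0 < p i → 0 < r) :
    ∑ i, klTerm (p i) ((∑ j, p j) / Fintype.card ι) ≤ ∑ i, klTerm (p i) r := by
  set N : ℝ := (Fintype.card ι : ℝ)
  set pbar := (∑ j, p j) / N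
  have hN : 0 < N := by positivity
  rcases (sum_nonneg fun i _ => hp i : 0 ≤ ∑ j, p j).eq_or_lt with hs | hs
  · have hp0 : ∀ i, p i = 0 := fun i =>
      (sum_eq_zero_iff_of_nonneg fun j _ => hp j).1 hs.symm i (mem_univ i)
    simp only [pbar, hp0, klTerm]
    simpa using mul_nonneg hN.le hr
  have hr : 0 < r := by
    by_contra h
    have hp0 : ∀ i, p i = 0 := fun i => le_antisymm (not_lt.1 fun hpi => h (hpr i hpi)) (hp i)
    simp [hp0] at hs
  have hpbar : 0 < pbar := by positivity
  have hdiff (i : ι) :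
      klTerm (p i) r = klTerm (p i) pbar + (p i * (log pbar - log r) + r - pbar) := by
    simp only [klTerm, mul_log_div_eq_sub _ hr.ne', mul_log_div_eq_sub _ hpbar.ne']
    ring
  have hmix : 0 ≤ klTerm pbar r := klTerm_nonneg hpbar.le hr.le fun _ => hr
  rw [klTerm, mul_log_div_eq_sub _ hr.ne'] at hmix
  have hsum : ∑ j, p j = N * pbar := (mul_div_cancel₀ _ hN.ne').symm
  rw [sum_congr rfl fun i _ => hdiff i, sum_add_distrib, sum_sub_distrib, sum_add_distrib,
    ← sum_mul, sum_const, sum_const, card_univ, nsmul_eq_mul, nsmul_eq_mul, hsum]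
  nlinarith

theorem sum_klDiv2_mixture_le [Fintype ι] [Nonempty ι] {p : ι → β → ℝ}
    (hp : ∀ i x, 0 ≤ p i x) {q : β → ℝ} (hq : ∀ x, 0 ≤ q x) :
    ∑ i, klDiv2 (p i) (mixture p) ≤ ∑ i, klDiv2 (p i) q := by
  by_cases hpq : ∀ i x, 0 < p i x → 0 < q x
  · have hmix : ∀ i x, 0 < p i x → 0 < mixture p x := fun i x => mixture_pos hp
    simp only [klDiv2_eq_tsum_klTerm (hmix _), klDiv2_eq_tsum_klTerm (hpq _), div_eq_mul_inv,
      ← sum_mul]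
    refine mul_le_mul_left ?_ _
    rw [← Summable.tsum_finsetSum fun _ _ => ENNReal.summable,
      ← Summable.tsum_finsetSum fun _ _ => ENNReal.summable]
    refine ENNReal.tsum_le_tsum fun x => ?_
    rw [← ENNReal.ofReal_sum_of_nonneg fun i _ =>
        klTerm_nonneg (hp i x) (mixture_nonneg hp x) (hmix i x),
      ← ENNReal.ofReal_sum_of_nonneg fun i _ => klTerm_nonneg (hp i x) (hq x) (hpq i x)]
    exact ENNReal.ofReal_le_ofReal
      (sum_klTerm_mixture_le (fun i => hp i x) (hq x) fun i => hpq i x)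
  · simp only [not_forall, not_lt] at hpq
    obtain ⟨i, x, hpos, hqx⟩ := hpq
    have htop : klDiv2 (p i) q = ⊤ := by
      rw [klDiv2, if_pos ⟨x, le_antisymm hqx (hq x), hpos⟩]
    exact le_top.trans_eq (ENNReal.sum_eq_top.2 ⟨i, mem_univ i, htop⟩).symm

theorem le_minimaxRedundancy_of_le_klDiv2_mixture [Fintype ι] [Nonempty ι] {Λ : Set (α → ℝ)}
    {P : ι → α → ℝ} (hPΛ : ∀ i, P i ∈ Λ) (hP : ∀ i a, 0 ≤ P i a) {n : ℕ} {B : ℝ≥0∞}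
    (hB : ∀ i, B ≤ klDiv2 (prodPmf (P i) n) (mixture fun i => prodPmf (P i) n)) :
    B ≤ minimaxRedundancy Λ n := by
  refine le_iInf₂ fun Q hQ => ?_
  have hN : (Fintype.card ι : ℝ≥0∞) ≠ 0 := by simp
  refine (ENNReal.mul_le_mul_iff_right hN (ENNReal.natCast_ne_top _)).1 ?_
  calc (Fintype.card ι : ℝ≥0∞) * B = ∑ _i : ι, B := by simp
    _ ≤ ∑ i, klDiv2 (prodPmf (P i) n) (mixture fun i => prodPmf (P i) n) :=
      sum_le_sum fun i _ => hB i
    _ ≤ ∑ i, klDiv2 (prodPmf (P i) n) Q :=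
      sum_klDiv2_mixture_le (fun i => prodPmf_nonneg (hP i) n) hQ.1
    _ ≤ ∑ _i : ι, ⨆ P ∈ Λ, klDiv2 (prodPmf P n) Q :=
      sum_le_sum fun i _ => le_iSup₂_of_le (P i) (hPΛ i) le_rfl
    _ = (Fintype.card ι : ℝ≥0∞) * ⨆ P ∈ Λ, klDiv2 (prodPmf P n) Q := by simp

theorem ofReal_tsum_mul_le_klDiv2 {p q : β → ℝ} (hp : IsPmf p) (hq : IsPmf q) {g : β → ℝ}
    (hg0 : ∀ x, 0 ≤ g x) (hg : ∀ x, 0 < p x → 0 < q x ∧ g x ≤ log (p x / q x)) :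
    (∑' x, ENNReal.ofReal (p x * g x)) / ENNReal.ofReal (log 2) ≤ klDiv2 p q := by
  rw [klDiv2_eq_tsum_klTerm fun x hx => (hg x hx).1]
  refine ENNReal.div_le_div_right ?_ _
  rw [← ENNReal.add_le_add_iff_right ENNReal.one_ne_top]
  nth_rewrite 1 [← hq.tsum_ofReal]
  nth_rewrite 1 [← hp.tsum_ofReal]
  rw [← ENNReal.tsum_add, ← ENNReal.tsum_add]
  refine ENNReal.tsum_le_tsum fun x => ?_
  rw [← ENNReal.ofReal_add (mul_nonneg (hp.1 x) (hg0 x)) (hq.1 x),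
    ← ENNReal.ofReal_add (klTerm_nonneg (hp.1 x) (hq.1 x) fun h => (hg x h).1) (hp.1 x)]
  refine ENNReal.ofReal_le_ofReal ?_
  rcases (hp.1 x).eq_or_lt with h | h
  · simp [klTerm, ← h]
  · have := mul_le_mul_of_nonneg_left (hg x h).2 h.le
    unfold klTerm
    linarith

end KL

theorem ofReal_one_sub_exp_le_one_sub_pow {a : ℝ} (ha0 : 0 ≤ a) (ha1 : a ≤ 1) (n : ℕ) :
    ENNReal.ofReal (1 - exp (-(n * a))) ≤ 1 - (1 - ENNReal.ofReal a) ^ n := by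
  have hpow : (1 - a) ^ n ≤ exp (-(n * a)) := by
    rw [neg_mul_eq_mul_neg, exp_nat_mul]
    exact pow_le_pow_left₀ (by linarith) (one_sub_le_exp_neg a) n
  rw [← ENNReal.ofReal_one, ← ENNReal.ofReal_sub _ ha0, ← ENNReal.ofReal_pow (by linarith),
    ← ENNReal.ofReal_sub _ (by positivity)]
  exact ENNReal.ofReal_le_ofReal (by linarith)

section BlockSource

variable {α : Type*} {m J n : ℕ}

def hitBlocks (e : α ≃ ℕ × Fin m) (J : ℕ) (x : Fin n → α) : Finset (Fin J) :=
  univ.filter fun j => ∃ i, (e (x i)).1 = j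

variable [NeZero m]

def extendParam (θ : Fin J → Fin m) (j : ℕ) : Fin m := if h : j < J then θ ⟨j, h⟩ else 0

@[simp]
theorem extendParam_val (θ : Fin J → Fin m) (j : Fin J) : extendParam θ j = θ j := by
  simp [extendParam]

/-- Through `e`, the symbols form blocks `(e a).1` of `m` symbols each; the source uses a single
position in every block. -/
def blockSource (e : α ≃ ℕ × Fin m) (q : ℕ → ℝ) (θ : Fin J → Fin m) (a : α) : ℝ :=
  if (e a).2 = extendParam θ (e a).1 then q (e a).1 else 0

def BlockCompatible (e : α ≃ ℕ × Fin m) (θ : Fin J → Fin m) (x : Fin n → α) : Prop :=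
  ∀ i, (e (x i)).2 = extendParam θ (e (x i)).1

variable {e : α ≃ ℕ × Fin m} {q : ℕ → ℝ}

theorem blockSource_nonneg (hq0 : ∀ j, 0 ≤ q j) (θ : Fin J → Fin m) (a : α) :
    0 ≤ blockSource e q θ a := by
  unfold blockSource
  split_ifs
  exacts [hq0 _, le_rfl]

theorem blockSource_le (hq0 : ∀ j, 0 ≤ q j) (θ : Fin J → Fin m) (a : α) :
    blockSource e q θ a ≤ q (e a).1 := by
  unfold blockSource
  split_ifs
  exacts [le_rfl, hq0 _]

theorem isPmf_blockSource (hq0 : ∀ j, 0 ≤ q j) (hq : HasSum q 1) (θ : Fin J → Fin m) :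
    IsPmf (blockSource e q θ) := by
  refine ⟨blockSource_nonneg hq0 θ, ?_⟩
  have hinj : Function.Injective fun j => e.symm (j, extendParam θ j) := fun j j' h => by
    simpa using congrArg (fun a => (e a).1) h
  refine (hinj.hasSum_iff fun a ha => if_neg fun h => ha ⟨(e a).1, ?_⟩).1 ?_
  · change e.symm ((e a).1, extendParam θ (e a).1) = a
    rw [← h, Prod.mk.eta, e.symm_apply_apply]
  · convert hq using 1
    funext j
    simp

theorem prodPmf_blockSource_of_blockCompatible {θ : Fin J → Fin m} {x : Fin n → α}
    (hθ : BlockCompatible e θ x) : prodPmf (blockSource e q θ) n x = ∏ i, q (e (x i)).1 :=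
  prod_congr rfl fun i _ => if_pos (hθ i)

theorem prodPmf_blockSource_of_not_blockCompatible {θ : Fin J → Fin m} {x : Fin n → α}
    (hθ : ¬BlockCompatible e θ x) : prodPmf (blockSource e q θ) n x = 0 := by
  obtain ⟨i, hi⟩ := not_forall.1 hθ
  exact prod_eq_zero (mem_univ i) (if_neg hi)

theorem eq_of_mem_hitBlocks {θ θ' : Fin J → Fin m} {x : Fin n → α} (hθ : BlockCompatible e θ x)
    (hθ' : BlockCompatible e θ' x) {j : Fin J} (hj : j ∈ hitBlocks e J x) : θ' j = θ j := by
  obtain ⟨i, hi⟩ := (mem_filter.1 hj).2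
  have h := hθ i
  have h' := hθ' i
  rw [hi, extendParam_val] at h h'
  exact h'.symm.trans h

open Classical in
/-- The positions in the blocks that `x` hits are forced, the others are free. -/
theorem card_blockCompatible_le {θ : Fin J → Fin m} {x : Fin n → α}
    (hθ : BlockCompatible e θ x) :
    #(univ.filter fun θ' : Fin J → Fin m => BlockCompatible e θ' x) ≤
      m ^ (J - #(hitBlocks e J x)) := by
  calc #(univ.filter fun θ' : Fin J → Fin m => BlockCompatible e θ' x)
      ≤ #(Fintype.piFinset fun j => if j ∈ hitBlocks e J x then {θ j} else univ) := by
        refine card_le_card fun θ' hθ' => Fintype.mem_piFinset.2 fun j => ?_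
        split_ifs with hj
        · exact mem_singleton.2 (eq_of_mem_hitBlocks hθ (mem_filter.1 hθ').2 hj)
        · exact mem_univ _
    _ = m ^ (J - #(hitBlocks e J x)) := by
        simp only [Fintype.card_piFinset, apply_ite card, card_singleton, card_univ,
          Fintype.card_fin]
        rw [prod_ite, prod_const_one, one_mul, prod_const]
        rw [filter_not, filter_mem_eq_inter, univ_inter, ← compl_eq_univ_sdiff, card_compl,
          Fintype.card_fin]

theorem mixture_blockSource_le (hq0 : ∀ j, 0 ≤ q j) {θ : Fin J → Fin m} {x : Fin n → α}
    (hθ : BlockCompatible e θ x) :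
    mixture (fun θ' : Fin J → Fin m => prodPmf (blockSource e q θ') n) x ≤
      prodPmf (blockSource e q θ) n x / (m : ℝ) ^ #(hitBlocks e J x) := by
  classical
  have hP : ∀ θ' : Fin J → Fin m, prodPmf (blockSource e q θ') n x =
      if BlockCompatible e θ' x then ∏ i, q (e (x i)).1 else 0 := fun θ' => by
    split_ifs with h
    exacts [prodPmf_blockSource_of_blockCompatible h, prodPmf_blockSource_of_not_blockCompatible h]
  have hm : (0 : ℝ) < m := Nat.cast_pos.2 (NeZero.pos m)
  have hcard : (#(univ.filter fun θ' : Fin J → Fin m => BlockCompatible e θ' x) : ℝ) *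
      (m : ℝ) ^ #(hitBlocks e J x) ≤ (m : ℝ) ^ J := by
    calc _ ≤ (m : ℝ) ^ (J - #(hitBlocks e J x)) * (m : ℝ) ^ #(hitBlocks e J x) := by
          gcongr
          exact_mod_cast card_blockCompatible_le hθ
      _ = (m : ℝ) ^ J := by
          rw [← pow_add, Nat.sub_add_cancel ((card_le_univ _).trans (Fintype.card_fin J).le)]
  rw [mixture, sum_congr rfl fun θ' _ => hP θ', sum_ite, sum_const_zero, add_zero, sum_const,
    nsmul_eq_mul, prodPmf_blockSource_of_blockCompatible hθ, Fintype.card_fun, Fintype.card_fin,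
    Fintype.card_fin, Nat.cast_pow, div_le_div_iff₀ (pow_pos hm _) (pow_pos hm _)]
  have hprod : 0 ≤ ∏ i, q (e (x i)).1 := prod_nonneg fun i _ => hq0 _
  nlinarith

/-- Each block hit by `x` costs the mixture a factor `m` against the true source. -/
theorem card_hitBlocks_mul_log_le (hq0 : ∀ j, 0 ≤ q j) {θ : Fin J → Fin m} {x : Fin n → α}
    (hx : 0 < prodPmf (blockSource e q θ) n x) :
    0 < mixture (fun θ' : Fin J → Fin m => prodPmf (blockSource e q θ') n) x ∧
      #(hitBlocks e J x) * log m ≤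
        log (prodPmf (blockSource e q θ) n x /
          mixture (fun θ' : Fin J → Fin m => prodPmf (blockSource e q θ') n) x) := by
  have hθ : BlockCompatible e θ x := by
    by_contra h
    exact hx.ne' (prodPmf_blockSource_of_not_blockCompatible h)
  have hmix := mixture_pos (fun θ' => prodPmf_nonneg (blockSource_nonneg hq0 θ') n) hx
  refine ⟨hmix, ?_⟩
  have hm : (0 : ℝ) < m := Nat.cast_pos.2 (NeZero.pos m)
  rw [← log_pow]
  refine log_le_log (by positivity) ?_
  rw [le_div_iff₀ hmix, ← le_div_iff₀' (by positivity)]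
  exact mixture_blockSource_le hq0 hθ

theorem tsum_indicator_blockSource (θ : Fin J → Fin m) (j : ℕ) :
    ∑' a, {a | (e a).1 = j}.indicator (fun a => ENNReal.ofReal (blockSource e q θ a)) a =
      ENNReal.ofReal (q j) := by
  rw [tsum_eq_single (e.symm (j, extendParam θ j))]
  · simp [blockSource]
  · intro a ha
    by_cases hj : (e a).1 = j
    · rw [Set.indicator_of_mem (s := {a | (e a).1 = j}) hj, blockSource, if_neg,
        ENNReal.ofReal_zero]
      intro h
      exact ha (e.eq_symm_apply.2 (Prod.ext hj (h.trans (by rw [hj]))))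
    · exact Set.indicator_of_notMem (s := {a | (e a).1 = j}) hj _

variable (n) in
theorem tsum_ofReal_prodPmf_mul_card_hitBlocks (hq0 : ∀ j, 0 ≤ q j) (hq : HasSum q 1)
    (θ : Fin J → Fin m) :
    ∑' x : Fin n → α, ENNReal.ofReal (prodPmf (blockSource e q θ) n x * #(hitBlocks e J x)) =
      ∑ j : Fin J, (1 - (1 - ENNReal.ofReal (q j)) ^ n) := by
  classical
  have hterm (x : Fin n → α) :
      ENNReal.ofReal (prodPmf (blockSource e q θ) n x * #(hitBlocks e J x)) =
        ∑ j : Fin J, {x : Fin n → α | ∃ i, x i ∈ {a | (e a).1 = j}}.indicator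
          (fun x => ∏ i, ENNReal.ofReal (blockSource e q θ (x i))) x := by
    rw [ENNReal.ofReal_mul (prodPmf_nonneg (blockSource_nonneg hq0 θ) n x), ENNReal.ofReal_natCast,
      prodPmf, ENNReal.ofReal_prod_of_nonneg fun i _ => blockSource_nonneg hq0 θ _, hitBlocks,
      card_filter, Nat.cast_sum, mul_sum]
    refine sum_congr rfl fun j _ => ?_
    simp [Set.indicator_apply]
  rw [tsum_congr hterm, Summable.tsum_finsetSum fun _ _ => ENNReal.summable]
  refine sum_congr rfl fun j _ => ?_
  rw [ENNReal.tsum_indicator_exists_mem (isPmf_blockSource hq0 hq θ).tsum_ofReal,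
    tsum_indicator_blockSource]

variable (n) in
theorem ofReal_logb_mul_sum_le_klDiv2_mixture (hq0 : ∀ j, 0 ≤ q j) (hq : HasSum q 1)
    (θ : Fin J → Fin m) :
    ENNReal.ofReal (logb 2 m * ∑ j ∈ range J, (1 - exp (-(n * q j)))) ≤
      klDiv2 (prodPmf (blockSource e q θ) n)
        (mixture fun θ' : Fin J → Fin m => prodPmf (blockSource e q θ') n) := by
  have hlogm : 0 ≤ log m := log_natCast_nonneg m
  refine le_trans ?_ (ofReal_tsum_mul_le_klDiv2 ((isPmf_blockSource hq0 hq θ).prodPmf n)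
    (IsPmf.mixture fun θ' => (isPmf_blockSource hq0 hq θ').prodPmf n)
    (g := fun x => #(hitBlocks e J x) * log m) (fun x => by positivity)
    fun x hx => card_hitBlocks_mul_log_le hq0 hx)
  have hexp (j : ℕ) : 0 ≤ 1 - exp (-(n * q j)) :=
    sub_nonneg.2 (exp_le_one_iff.2 (neg_nonpos.2 (mul_nonneg n.cast_nonneg (hq0 j))))
  calc ENNReal.ofReal (logb 2 m * ∑ j ∈ range J, (1 - exp (-(n * q j))))
      = ENNReal.ofReal (log m) * (∑ j : Fin J, ENNReal.ofReal (1 - exp (-(n * q j)))) /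
          ENNReal.ofReal (log 2) := by
        rw [← ENNReal.ofReal_sum_of_nonneg (f := fun j : Fin J => 1 - exp (-(n * q j)))
            fun j _ => hexp j, ← ENNReal.ofReal_mul hlogm,
          ← ENNReal.ofReal_div_of_pos (log_pos one_lt_two),
          Fin.sum_univ_eq_sum_range (fun j => 1 - exp (-(n * q j))), logb, div_mul_eq_mul_div]
    _ ≤ ENNReal.ofReal (log m) * (∑ j : Fin J, (1 - (1 - ENNReal.ofReal (q j)) ^ n)) /
          ENNReal.ofReal (log 2) := by
        gcongr with j
        exact ofReal_one_sub_exp_le_one_sub_pow (hq0 j) (le_hasSum hq j fun i _ => hq0 i) n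
    _ = (∑' x, ENNReal.ofReal (prodPmf (blockSource e q θ) n x *
          (#(hitBlocks e J x) * log m))) / ENNReal.ofReal (log 2) := by
        rw [← tsum_ofReal_prodPmf_mul_card_hitBlocks n hq0 hq θ, ← ENNReal.tsum_mul_left]
        congr 1
        refine tsum_congr fun x => ?_
        rw [← ENNReal.ofReal_mul hlogm, mul_comm (log m), ← mul_assoc]

end BlockSource

theorem blockSource_mem_envClass {m J : ℕ} [NeZero m] {e : ℕ+ ≃ ℕ × Fin m} {q : ℕ → ℝ}
    (hq0 : ∀ j, 0 ≤ q j) (hq : HasSum q 1) {f : ℕ+ → ℝ} (hf : ∀ k, q (e k).1 ≤ f k)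
    (θ : Fin J → Fin m) :
    blockSource e q θ ∈ envClass f :=
  ⟨isPmf_blockSource hq0 hq θ, fun k => (blockSource_le hq0 θ k).trans (hf k)⟩

theorem ofReal_logb_mul_sum_le_minimaxRedundancy {m : ℕ} [NeZero m] {e : ℕ+ ≃ ℕ × Fin m}
    {q : ℕ → ℝ} (hq0 : ∀ j, 0 ≤ q j) (hq : HasSum q 1) {f : ℕ+ → ℝ}
    (hf : ∀ k, q (e k).1 ≤ f k) (n J : ℕ) :
    ENNReal.ofReal (logb 2 m * ∑ j ∈ range J, (1 - exp (-(n * q j)))) ≤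
      minimaxRedundancy (envClass f) n :=
  le_minimaxRedundancy_of_le_klDiv2_mixture (ι := Fin J → Fin m)
    (blockSource_mem_envClass hq0 hq hf) (blockSource_nonneg hq0)
    (ofReal_logb_mul_sum_le_klDiv2_mixture n hq0 hq)

section Integral

open MeasureTheory

variable {α ζ : ℝ} {n : ℕ}

/-- `hitIntegrand α ζ n (1 + j) = 1 - exp (-(n * q j))` for `q j = (j + 1) ^ (-α) / ζ`: a lower
bound for the probability that `n` draws from the block source hit block `j`. -/
def hitIntegrand (α ζ : ℝ) (n : ℕ) (t : ℝ) : ℝ := 1 - exp (-(n * (t ^ (-α) / ζ)))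

theorem hitIntegrand_nonneg (hζ : 0 < ζ) {t : ℝ} (ht : 0 ≤ t) : 0 ≤ hitIntegrand α ζ n t := by
  have hexp : exp (-(n * (t ^ (-α) / ζ))) ≤ 1 := exp_le_one_iff.2 (neg_nonpos.2 (by positivity))
  unfold hitIntegrand
  linarith

theorem antitoneOn_hitIntegrand (hα : 0 < α) (hζ : 0 < ζ) :
    AntitoneOn (hitIntegrand α ζ n) (Set.Ioi 0) := fun s hs t _ hst => by
  have := rpow_le_rpow_of_nonpos hs hst (neg_nonpos.2 hα.le)
  unfold hitIntegrand
  gcongr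

theorem integrableOn_hitIntegrand (hα : 1 < α) (hζ : 0 < ζ) :
    IntegrableOn (hitIntegrand α ζ n) (Set.Ioi 1) := by
  refine ((integrableOn_Ioi_rpow_of_lt (neg_lt_neg hα) one_pos).const_mul (n / ζ)).mono'
    (by unfold hitIntegrand; fun_prop) ?_
  filter_upwards [ae_restrict_mem measurableSet_Ioi] with t (ht : 1 < t)
  rw [norm_of_nonneg (hitIntegrand_nonneg hζ (by linarith))]
  have := add_one_le_exp (-(n * (t ^ (-α) / ζ)))
  have h : (n : ℝ) / ζ * t ^ (-α) = n * (t ^ (-α) / ζ) := by ring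
  unfold hitIntegrand
  linarith

theorem ofReal_mul_setIntegral_le_of_forall_sum_le {φ : ℝ → ℝ} {a c : ℝ}
    (hφ : AntitoneOn φ (Set.Ici a)) (hint : IntegrableOn φ (Set.Ioi a)) (hc : 0 ≤ c)
    {R : ℝ≥0∞} (hR : ∀ J : ℕ, ENNReal.ofReal (c * ∑ i ∈ range J, φ (a + i)) ≤ R) :
    ENNReal.ofReal (c * ∫ t in Set.Ioi a, φ t) ≤ R := by
  have hlim : Filter.Tendsto (fun J : ℕ => ENNReal.ofReal (c * ∫ t in a..a + J, φ t))
      Filter.atTop (nhds (ENNReal.ofReal (c * ∫ t in Set.Ioi a, φ t))) :=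
    (ENNReal.continuous_ofReal.tendsto _).comp ((intervalIntegral_tendsto_integral_Ioi a hint
      (Filter.tendsto_atTop_add_const_left _ a tendsto_natCast_atTop_atTop)).const_mul c)
  refine le_of_tendsto' hlim fun J => le_trans ?_ (hR J)
  exact ENNReal.ofReal_le_ofReal (mul_le_mul_of_nonneg_left
    ((hφ.mono Set.Icc_subset_Ici_self).integral_le_sum) hc)

theorem rpow_mul_integral_eq_setIntegral_hitIntegrand (hα : 0 < α) (hn : 0 < n) :
    (n : ℝ) ^ (1 / α) *
        ((1 / α) * ∫ u in Set.Ioi (1 : ℝ), 1 / u ^ (1 - 1 / α) * (1 - exp (-(1 / (ζ * u))))) =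
      ∫ t in Set.Ioi ((n : ℝ) ^ (1 / α)), hitIntegrand α ζ n t := by
  set g : ℝ → ℝ := fun u => 1 / u ^ (1 - 1 / α) * (1 - exp (-(1 / (ζ * u))))
  have hn' : (0 : ℝ) < n := Nat.cast_pos.2 hn
  have hscale : ∫ y in Set.Ioi (n : ℝ), g ((n : ℝ)⁻¹ * y) = n * ∫ u in Set.Ioi 1, g u := by
    rw [integral_comp_mul_left_Ioi g _ (inv_pos.2 hn'), inv_mul_cancel₀ hn'.ne', inv_inv,
      smul_eq_mul]
  have hsubst (t : ℝ) (ht : t ∈ Set.Ioi ((n : ℝ) ^ α⁻¹)) :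
      (α * t ^ (α - 1)) • g ((n : ℝ)⁻¹ * t ^ α) =
        α * (n : ℝ) ^ (1 - 1 / α) * hitIntegrand α ζ n t := by
    have ht : 0 < t := lt_of_le_of_lt (by positivity) ht
    have hpow : ((n : ℝ)⁻¹ * t ^ α) ^ (1 - 1 / α) = t ^ (α - 1) / (n : ℝ) ^ (1 - 1 / α) := by
      rw [mul_rpow (by positivity) (by positivity), inv_rpow hn'.le, ← rpow_mul ht.le,
        mul_one_sub, mul_one_div_cancel hα.ne', inv_mul_eq_div]
    have hexp : 1 / (ζ * ((n : ℝ)⁻¹ * t ^ α)) = n * (t ^ (-α) / ζ) := by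
      rw [rpow_neg ht.le]
      field_simp
    simp only [g, smul_eq_mul, hpow, hexp, hitIntegrand]
    field_simp
  have key := integral_comp_rpow_Ioi_of_pos' (g := fun y => g ((n : ℝ)⁻¹ * y)) hα hn'.le
  rw [setIntegral_congr_fun measurableSet_Ioi hsubst, integral_const_mul, hscale, ← one_div]
    at key
  have hsplit : (n : ℝ) ^ (1 / α) * (n : ℝ) ^ (1 - 1 / α) = n := by
    rw [← rpow_add hn', add_sub_cancel, rpow_one]
  set H := ∫ t in Set.Ioi ((n : ℝ) ^ (1 / α)), hitIntegrand α ζ n t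
  calc (n : ℝ) ^ (1 / α) * ((1 / α) * ∫ u in Set.Ioi 1, g u)
      = (n : ℝ) ^ (1 / α) * ((1 / α) * (α * (n : ℝ) ^ (1 - 1 / α) * H / n)) := by
        rw [key, mul_div_cancel_left₀ _ hn'.ne']
    _ = ((n : ℝ) ^ (1 / α) * (n : ℝ) ^ (1 - 1 / α)) * H / n := by
        field_simp
    _ = H := by rw [hsplit, mul_div_cancel_left₀ _ hn'.ne']

theorem rpow_mul_integral_le_setIntegral_hitIntegrand (hα : 1 < α) (hζ : 0 < ζ) (hn : 0 < n) :
    (n : ℝ) ^ (1 / α) *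
        ((1 / α) * ∫ u in Set.Ioi (1 : ℝ), 1 / u ^ (1 - 1 / α) * (1 - exp (-(1 / (ζ * u))))) ≤
      ∫ t in Set.Ioi 1, hitIntegrand α ζ n t := by
  rw [rpow_mul_integral_eq_setIntegral_hitIntegrand (by linarith) hn]
  refine setIntegral_mono_set (integrableOn_hitIntegrand hα hζ) ?_
    (Set.Ioi_subset_Ioi (one_le_rpow (Nat.one_le_cast.2 hn) (by positivity))).eventuallyLE
  filter_upwards [ae_restrict_mem measurableSet_Ioi] with t (ht : 1 < t)
  exact hitIntegrand_nonneg hζ (by linarith)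

end Integral

section PowerLaw

variable {α C ζ : ℝ}

theorem hasSum_rpow_neg (hα : 1 < α) :
    HasSum (fun j : ℕ => ((j + 1 : ℕ) : ℝ) ^ (-α)) (∑' k : ℕ+, (k : ℝ) ^ (-α)) :=
  hasSum_pnat_iff_hasSum_succ (f := fun k : ℕ => (k : ℝ) ^ (-α)) |>.1
    (summable_pnat_iff_summable_nat.2 (Real.summable_nat_rpow.2 (by linarith))).hasSum

/-- Block `j` consists of the symbols `m j < k ≤ m (j + 1)`. -/
theorem rpow_neg_div_le_envelope (hα : 0 < α) (hζ : 1 ≤ ζ) {m : ℕ} (hm : (m : ℝ) ^ α ≤ C * ζ)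
    {j k : ℕ} (hk : 0 < k) (hkm : k ≤ m * (j + 1)) :
    ((j + 1 : ℕ) : ℝ) ^ (-α) / ζ ≤ min 1 (C / (k : ℝ) ^ α) := by
  set b : ℝ := ((j + 1 : ℕ) : ℝ)
  have hb : 1 ≤ b := Nat.one_le_cast.2 (Nat.succ_pos j)
  have hbα : b ^ (-α) ≤ 1 := rpow_le_one_of_one_le_of_nonpos hb (by linarith)
  refine le_min (div_le_one_of_le₀ (hbα.trans hζ) (by linarith)) ?_
  rw [div_le_div_iff₀ (by linarith) (by positivity)]
  calc b ^ (-α) * (k : ℝ) ^ α ≤ b ^ (-α) * ((m : ℝ) ^ α * b ^ α) := by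
        rw [← mul_rpow (by positivity) (by positivity)]
        gcongr
        simp only [b]
        exact_mod_cast hkm
    _ = (m : ℝ) ^ α := by
        rw [rpow_neg (by positivity)]
        field_simp
    _ ≤ C * ζ := hm

theorem two_le_floor_rpow_one_div {x : ℝ} (hα : 0 < α) (hx : 2 ^ α ≤ x) :
    2 ≤ ⌊x ^ (1 / α)⌋₊ := by
  refine Nat.le_floor ?_
  calc ((2 : ℕ) : ℝ) = ((2 : ℝ) ^ α) ^ (1 / α) := by
        rw [← rpow_mul zero_le_two, mul_one_div_cancel hα.ne', rpow_one]; norm_num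
    _ ≤ x ^ (1 / α) := by gcongr

theorem floor_rpow_one_div_rpow_le {x : ℝ} (hα : 0 < α) (hx : 0 ≤ x) :
    (⌊x ^ (1 / α)⌋₊ : ℝ) ^ α ≤ x := by
  calc (⌊x ^ (1 / α)⌋₊ : ℝ) ^ α ≤ (x ^ (1 / α)) ^ α := by
        gcongr
        exact Nat.floor_le (by positivity)
    _ = x := by rw [← rpow_mul hx, one_div_mul_cancel hα.ne', rpow_one]

/-- `k ↦ ((k - 1) / m, (k - 1) % m)` -/
def blockEquiv (m : ℕ) [NeZero m] : ℕ+ ≃ ℕ × Fin m :=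
  Equiv.pnatEquivNat.trans (Nat.divModEquiv m)

theorem le_mul_blockEquiv_fst_add_one (m : ℕ) [NeZero m] (k : ℕ+) :
    (k : ℕ) ≤ m * ((blockEquiv m k).1 + 1) := by
  have := Nat.lt_mul_div_succ ((k : ℕ) - 1) (Nat.pos_of_neZero m)
  simp only [blockEquiv, Equiv.trans_apply, Equiv.pnatEquivNat_apply, PNat.natPred,
    Nat.divModEquiv_apply]
  omega

end PowerLaw

/-- lower bound on the minimax redundancy of power-law envelope classes. -/
theorem stmt11 (alpha C : ℝ) (halpha : 1 < alpha)
    (zeta : ℝ) (hzeta : zeta = ∑' k : ℕ+, (k : ℝ) ^ (-alpha))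
    (hC : 2 ^ alpha ≤ C * zeta)
    (A : ℝ)
    (hA : A = (1 / alpha) *
      ∫ u in Set.Ioi (1 : ℝ),
        (1 / u ^ (1 - 1 / alpha)) * (1 - Real.exp (-(1 / (zeta * u)))))
    (n : ℕ) (hn : 1 ≤ n) :
    ENNReal.ofReal
        ((n : ℝ) ^ (1 / alpha) * A * Real.logb 2 (⌊(C * zeta) ^ (1 / alpha)⌋ : ℝ)) ≤
      minimaxRedundancy (envClass fun k : ℕ+ => min 1 (C / (k : ℝ) ^ alpha)) n := by
  have hα : 0 < alpha := by linarith
  have hζsum : HasSum (fun j : ℕ => ((j + 1 : ℕ) : ℝ) ^ (-alpha)) zeta :=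
    hzeta ▸ hasSum_rpow_neg halpha
  have hζ1 : 1 ≤ zeta := by simpa using le_hasSum hζsum 0 fun j _ => by positivity
  have hζ : 0 < zeta := by linarith
  have hCζ : 0 ≤ C * zeta := (rpow_nonneg zero_le_two _).trans hC
  set m := ⌊(C * zeta) ^ (1 / alpha)⌋₊
  have hm : 2 ≤ m := two_le_floor_rpow_one_div hα hC
  have : NeZero m := ⟨by omega⟩
  have hlogm : 0 ≤ logb 2 m := logb_nonneg one_lt_two (by exact_mod_cast (by omega : 1 ≤ m))
  set q : ℕ → ℝ := fun j => ((j + 1 : ℕ) : ℝ) ^ (-alpha) / zeta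
  have hq : HasSum q 1 := by simpa only [div_self hζ.ne'] using hζsum.div_const zeta
  have henv (k : ℕ+) : q (blockEquiv m k).1 ≤ min 1 (C / (k : ℝ) ^ alpha) :=
    rpow_neg_div_le_envelope hα hζ1 (floor_rpow_one_div_rpow_le hα hCζ) k.pos
      (le_mul_blockEquiv_fst_add_one m k)
  have hsum (J : ℕ) : ∑ j ∈ range J, (1 - exp (-(n * q j))) =
      ∑ j ∈ range J, hitIntegrand alpha zeta n (1 + j) :=
    sum_congr rfl fun j _ => by simp [q, hitIntegrand, add_comm]
  rw [← natCast_floor_eq_intCast_floor (by positivity), mul_comm]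
  calc ENNReal.ofReal (logb 2 m * ((n : ℝ) ^ (1 / alpha) * A))
      ≤ ENNReal.ofReal (logb 2 m * ∫ t in Set.Ioi 1, hitIntegrand alpha zeta n t) := by
        rw [hA]
        gcongr
        exact rpow_mul_integral_le_setIntegral_hitIntegrand halpha hζ hn
    _ ≤ _ := ofReal_mul_setIntegral_le_of_forall_sum_le
        ((antitoneOn_hitIntegrand hα hζ).mono (Set.Ici_subset_Ioi.2 one_pos))
        (integrableOn_hitIntegrand halpha hζ) hlogm fun J =>
          hsum J ▸ ofReal_logb_mul_sum_le_minimaxRedundancy (fun j => by positivity) hq henv n J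
end
end

section
/- Let m be a positive integer and let Λ be the class of all probability mass functions on the finite alphabet {1,…,m}. Then for every integer n ≥ 2, the minimax regret satisfies R*(Λ^n) ≤ ((m−1)/2)·log n + 2. -/
/-!
Let `c_a` be the number of occurrences of the letter `a` in a word `x` of length `n`. The
Krichevsky–Trofimov mixture `Q(x) = ∏_a (2c_a - 1)!! / ∏_{i<n} (m + 2i)` is a probability on
words (a Pólya urn identity). For every memoryless `P`, maximum likelihood gives
`P^n(x) ≤ ∏_a (c_a/n)^{c_a}`, and the two-sided Stirling bounds for `n!` turn this into
`P^n(x) ≤ 4 n^{(m-1)/2} Q(x)`. Taking `log₂` bounds the regret of `Q` by `((m-1)/2) log n + 2`.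
-/

open scoped ENNReal BigOperators

noncomputable section

open Real Finset
open scoped Nat

namespace Stirling

theorem factorial_le_stirling {n : ℕ} (hn : n ≠ 0) :
    (n ! : ℝ) ≤ exp 1 * √n * (n / exp 1) ^ n := by
  obtain ⟨k, rfl⟩ := Nat.exists_eq_succ_of_ne_zero hn
  have h := stirlingSeq'_antitone (Nat.zero_le k)
  rw [Function.comp_apply, Function.comp_apply, stirlingSeq_one, stirlingSeq,
    div_le_iff₀ (by positivity), Real.sqrt_mul zero_le_two] at h
  exact h.trans_eq (by field_simp)

theorem two_pow_mul_factorial_le {n : ℕ} (hn : n ≠ 0) :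
    2 ^ n * (n ! : ℝ) ≤ exp 1 * √n * (2 * n / exp 1) ^ n :=
  calc 2 ^ n * (n ! : ℝ) ≤ 2 ^ n * (exp 1 * √n * (n / exp 1) ^ n) := by
        gcongr; exact factorial_le_stirling hn
    _ = exp 1 * √n * (2 * n / exp 1) ^ n := by rw [mul_div_assoc, mul_pow]; ring

theorem le_two_pow_mul_factorial (n : ℕ) :
    √(2 * π * n) * (2 * n / exp 1) ^ n ≤ 2 ^ n * (n ! : ℝ) :=
  calc √(2 * π * n) * (2 * n / exp 1) ^ n = 2 ^ n * (√(2 * π * n) * (n / exp 1) ^ n) := by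
        rw [mul_div_assoc, mul_pow]; ring
    _ ≤ 2 ^ n * (n ! : ℝ) := by gcongr; exact le_factorial_stirling n

theorem factorial_two_mul_le {n : ℕ} (hn : n ≠ 0) :
    ((2 * n)! : ℝ) ≤ exp 1 * √(2 * n) * ((2 * n / exp 1) ^ n) ^ 2 := by
  have h := factorial_le_stirling (n := 2 * n) (by omega)
  rwa [Nat.cast_mul, Nat.cast_two, pow_mul'] at h

theorem le_factorial_two_mul (n : ℕ) :
    2 * √π * √n * ((2 * n / exp 1) ^ n) ^ 2 ≤ ((2 * n)! : ℝ) := by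
  have h := le_factorial_stirling (2 * n)
  rw [Nat.cast_mul, Nat.cast_two, pow_mul'] at h
  refine le_trans (le_of_eq ?_) h
  rw [show 2 * π * (2 * n) = 2 ^ 2 * π * n by ring, Real.sqrt_mul (by positivity),
    Real.sqrt_mul (by positivity), Real.sqrt_sq zero_le_two]

end Stirling

theorem exp_one_sq_lt : exp 1 ^ 2 < 7.4 := by
  nlinarith [exp_one_lt_d9, exp_pos 1]

theorem lt_sqrt_pi : 1.77 < √π :=
  Real.lt_sqrt_of_sq_lt (by nlinarith [pi_gt_d2])

theorem one_le_two_mul_sqrt_pi_div_exp_one : 1 ≤ 2 * √π / exp 1 := by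
  rw [le_div_iff₀ (exp_pos 1)]
  linarith [exp_one_lt_d9, lt_sqrt_pi]

theorem exp_one_div_sqrt_pi_mul_le {a b : ℝ} (h : exp 1 ^ 2 * a ≤ 8 * π * b) :
    exp 1 / √π * a ≤ 8 * √π / exp 1 * b := by
  rw [div_mul_eq_mul_div, div_mul_eq_mul_div, div_le_div_iff₀ (by positivity) (exp_pos 1)]
  linear_combination h - 8 * b * Real.mul_self_sqrt pi_pos.le

theorem exp_one_mul_le {a b : ℝ} (h : exp 1 ^ 2 * a ≤ 8 * √π * b) :
    exp 1 * a ≤ 8 * √π / exp 1 * b := by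
  rw [div_mul_eq_mul_div, le_div_iff₀ (exp_pos 1)]
  nlinarith

/-- `oddProd c = (2c - 1)‼`. -/
def oddProd (c : ℕ) : ℝ := ∏ j ∈ range c, (2 * j + 1)

theorem oddProd_succ (c : ℕ) : oddProd (c + 1) = oddProd c * (2 * c + 1) :=
  prod_range_succ _ _

theorem oddProd_pos (c : ℕ) : 0 < oddProd c := by unfold oddProd; positivity

theorem oddProd_mul_two_pow_mul_factorial (c : ℕ) :
    oddProd c * (2 ^ c * c !) = ((2 * c)! : ℝ) := by
  induction c with
  | zero => simp [oddProd]
  | succ c ih =>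
    rw [oddProd_succ, show 2 * (c + 1) = 2 * c + 1 + 1 by ring, Nat.factorial_succ,
      Nat.factorial_succ, Nat.factorial_succ, pow_succ]
    push_cast
    linear_combination (2 * (c : ℝ) + 1) * 2 * ((c : ℝ) + 1) * ih

theorem oddProd_le {c : ℕ} (hc : c ≠ 0) :
    oddProd c ≤ exp 1 / √π * (2 * c / exp 1) ^ c := by
  set u := (2 * c / exp 1) ^ c
  have key : oddProd c * (√π * √(2 * c) * u) ≤ exp 1 * √(2 * c) * u ^ 2 :=
    calc oddProd c * (√π * √(2 * c) * u) = oddProd c * (√(2 * π * c) * u) := by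
          rw [← Real.sqrt_mul Real.pi_pos.le]; ring_nf
      _ ≤ oddProd c * (2 ^ c * c !) :=
          mul_le_mul_of_nonneg_left (Stirling.le_two_pow_mul_factorial c) (oddProd_pos c).le
      _ ≤ exp 1 * √(2 * c) * u ^ 2 := by
          rw [oddProd_mul_two_pow_mul_factorial]; exact Stirling.factorial_two_mul_le hc
  refine le_of_mul_le_mul_right (key.trans_eq ?_) (by positivity : 0 < √π * √(2 * c) * u)
  field_simp

theorem le_oddProd {c : ℕ} (hc : c ≠ 0) :
    2 * √π / exp 1 * (2 * c / exp 1) ^ c ≤ oddProd c := by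
  set u := (2 * c / exp 1) ^ c
  have key : 2 * √π * √c * u ^ 2 ≤ oddProd c * (exp 1 * √c * u) :=
    calc 2 * √π * √c * u ^ 2 ≤ oddProd c * (2 ^ c * c !) := by
          rw [oddProd_mul_two_pow_mul_factorial]; exact Stirling.le_factorial_two_mul c
      _ ≤ oddProd c * (exp 1 * √c * u) :=
          mul_le_mul_of_nonneg_left (Stirling.two_pow_mul_factorial_le hc) (oddProd_pos c).le
  refine le_of_mul_le_mul_right (le_trans (le_of_eq ?_) key) (by positivity : 0 < exp 1 * √c * u)
  field_simp

theorem pow_le_oddProd (c : ℕ) : (2 * c / exp 1) ^ c ≤ oddProd c := by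
  rcases eq_or_ne c 0 with rfl | hc
  · simp [oddProd]
  · exact le_trans (le_mul_of_one_le_left (by positivity) one_le_two_mul_sqrt_pi_div_exp_one)
      (le_oddProd hc)

def ktNormalizer (m n : ℕ) : ℝ := ∏ i ∈ range n, (m + 2 * i)

theorem ktNormalizer_pos {m : ℕ} (hm : m ≠ 0) (n : ℕ) : 0 < ktNormalizer m n := by
  unfold ktNormalizer
  exact prod_pos fun i _ => by positivity

theorem ktNormalizer_one (n : ℕ) : ktNormalizer 1 n = oddProd n := by
  simp only [ktNormalizer, oddProd, Nat.cast_one, add_comm]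

theorem ktNormalizer_two (n : ℕ) : ktNormalizer 2 n = 2 ^ n * n ! := by
  induction n with
  | zero => simp [ktNormalizer]
  | succ n ih =>
    rw [ktNormalizer, prod_range_succ, ← ktNormalizer, ih, Nat.factorial_succ, pow_succ]
    push_cast; ring

theorem mul_ktNormalizer_add_two (m n : ℕ) :
    m * ktNormalizer (m + 2) n = (m + 2 * n) * ktNormalizer m n := by
  induction n with
  | zero => simp [ktNormalizer]
  | succ n ih =>
    simp only [ktNormalizer, prod_range_succ] at ih ⊢
    push_cast at ih ⊢
    linear_combination ((m : ℝ) + 2 + 2 * n) * ih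

theorem ktNormalizer_three (n : ℕ) : ktNormalizer 3 n = (2 * n + 1) * oddProd n := by
  have h := mul_ktNormalizer_add_two 1 n
  rw [Nat.cast_one, one_mul, ktNormalizer_one] at h
  rw [h, add_comm]

theorem ktNormalizer_four (n : ℕ) : ktNormalizer 4 n = (n + 1) * (2 ^ n * n !) := by
  have h := mul_ktNormalizer_add_two 2 n
  rw [ktNormalizer_two] at h
  push_cast at h
  linear_combination h / 2

theorem ktNormalizer_five (n : ℕ) :
    3 * ktNormalizer 5 n = (2 * n + 3) * (2 * n + 1) * oddProd n := by
  have h := mul_ktNormalizer_add_two 3 n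
  rw [ktNormalizer_three] at h
  push_cast at h
  linear_combination h

theorem ktNormalizer_add_two_le {m n : ℕ} (hm : 4 ≤ m) (hn : 2 ≤ n) :
    ktNormalizer (m + 2) n ≤ n * ktNormalizer m n := by
  have hm' : (4 : ℝ) ≤ m := by exact_mod_cast hm
  have hn' : (2 : ℝ) ≤ n := by exact_mod_cast hn
  refine le_of_mul_le_mul_left ?_ (by positivity : (0 : ℝ) < m)
  rw [mul_ktNormalizer_add_two, ← mul_assoc]
  gcongr
  · exact (ktNormalizer_pos (by omega) n).le
  · nlinarith

theorem ktNormalizer_one_le {n : ℕ} (hn : n ≠ 0) :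
    ktNormalizer 1 n ≤ 8 * √π / exp 1 * (2 * n / exp 1) ^ n := by
  rw [ktNormalizer_one]
  refine (oddProd_le hn).trans (exp_one_div_sqrt_pi_mul_le ?_)
  gcongr
  nlinarith [exp_one_sq_lt, pi_gt_d2]

theorem ktNormalizer_two_le {n : ℕ} (hn : n ≠ 0) :
    ktNormalizer 2 n ≤ 8 * √π / exp 1 * √n * (2 * n / exp 1) ^ n := by
  rw [ktNormalizer_two, mul_assoc]
  refine (Stirling.two_pow_mul_factorial_le hn).trans ?_
  rw [mul_assoc]
  refine exp_one_mul_le ?_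
  gcongr
  nlinarith [exp_one_sq_lt, lt_sqrt_pi]

theorem ktNormalizer_three_le {n : ℕ} (hn : n ≠ 0) :
    ktNormalizer 3 n ≤ 8 * √π / exp 1 * √n ^ 2 * (2 * n / exp 1) ^ n := by
  have hn' : (1 : ℝ) ≤ n := by exact_mod_cast Nat.one_le_iff_ne_zero.mpr hn
  have hc : exp 1 ^ 2 * (2 * n + 1) ≤ 8 * π * n := by nlinarith [exp_one_sq_lt, pi_gt_d2]
  set u := (2 * n / exp 1) ^ n
  have hu : 0 ≤ u := by positivity
  calc ktNormalizer 3 n = (2 * n + 1) * oddProd n := ktNormalizer_three n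
    _ ≤ (2 * n + 1) * (exp 1 / √π * u) := by gcongr; exact oddProd_le hn
    _ = exp 1 / √π * ((2 * n + 1) * u) := by ring
    _ ≤ 8 * √π / exp 1 * (n * u) :=
        exp_one_div_sqrt_pi_mul_le (by linarith [mul_le_mul_of_nonneg_right hc hu])
    _ = 8 * √π / exp 1 * √n ^ 2 * u := by rw [Real.sq_sqrt (by positivity)]; ring

theorem ktNormalizer_four_le {n : ℕ} (hn : 2 ≤ n) :
    ktNormalizer 4 n ≤ 8 * √π / exp 1 * √n ^ 3 * (2 * n / exp 1) ^ n := by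
  have hn' : (2 : ℝ) ≤ n := by exact_mod_cast hn
  have hc : exp 1 ^ 2 * (n + 1) ≤ 8 * √π * n := by nlinarith [exp_one_sq_lt, lt_sqrt_pi]
  set u := (2 * n / exp 1) ^ n
  have hu : 0 ≤ √n * u := by positivity
  calc ktNormalizer 4 n = (n + 1) * (2 ^ n * n !) := ktNormalizer_four n
    _ ≤ (n + 1) * (exp 1 * √n * u) :=
        mul_le_mul_of_nonneg_left (Stirling.two_pow_mul_factorial_le (by omega)) (by positivity)
    _ = exp 1 * ((n + 1) * (√n * u)) := by ring
    _ ≤ 8 * √π / exp 1 * (n * (√n * u)) :=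
        exp_one_mul_le (by linarith [mul_le_mul_of_nonneg_right hc hu])
    _ = 8 * √π / exp 1 * √n ^ 3 * u := by rw [pow_succ, Real.sq_sqrt (by positivity)]; ring

theorem ktNormalizer_five_le {n : ℕ} (hn : 2 ≤ n) :
    ktNormalizer 5 n ≤ 8 * √π / exp 1 * √n ^ 4 * (2 * n / exp 1) ^ n := by
  have hn' : (2 : ℝ) ≤ n := by exact_mod_cast hn
  have hc : exp 1 ^ 2 * ((2 * n + 3) * (2 * n + 1)) ≤ 8 * π * (3 * n ^ 2) := by
    nlinarith [exp_one_sq_lt, pi_gt_d2]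
  set u := (2 * n / exp 1) ^ n
  have hu : 0 ≤ u := by positivity
  refine le_of_mul_le_mul_left ?_ (three_pos : (0 : ℝ) < 3)
  calc 3 * ktNormalizer 5 n = (2 * n + 3) * (2 * n + 1) * oddProd n := ktNormalizer_five n
    _ ≤ (2 * n + 3) * (2 * n + 1) * (exp 1 / √π * u) := by gcongr; exact oddProd_le (by omega)
    _ = exp 1 / √π * ((2 * n + 3) * (2 * n + 1) * u) := by ring
    _ ≤ 8 * √π / exp 1 * (3 * n ^ 2 * u) :=
        exp_one_div_sqrt_pi_mul_le (by linarith [mul_le_mul_of_nonneg_right hc hu])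
    _ = 3 * (8 * √π / exp 1 * √n ^ 4 * u) := by
        rw [show √(n : ℝ) ^ 4 = (√n ^ 2) ^ 2 by ring, Real.sq_sqrt (by positivity)]; ring

/- The recursion `ktNormalizer_add_two_le` only starts at `m = 4`, so the alphabet sizes
`1, …, 5` are checked against Stirling's bounds one by one. -/
theorem ktNormalizer_succ_le (k : ℕ) {n : ℕ} (hn : 2 ≤ n) :
    ktNormalizer (k + 1) n ≤ 8 * √π / exp 1 * √n ^ k * (2 * n / exp 1) ^ n := by
  induction k using Nat.strong_induction_on with
  | _ k ih =>
  match k with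
  | 0 => simpa using ktNormalizer_one_le (by omega)
  | 1 => simpa using ktNormalizer_two_le (by omega)
  | 2 => exact ktNormalizer_three_le (by omega)
  | 3 => exact ktNormalizer_four_le hn
  | 4 => exact ktNormalizer_five_le hn
  | k + 5 =>
    calc ktNormalizer (k + 4 + 2) n ≤ n * ktNormalizer (k + 3 + 1) n :=
          ktNormalizer_add_two_le (by omega) hn
      _ ≤ n * (8 * √π / exp 1 * √n ^ (k + 3) * (2 * n / exp 1) ^ n) := by
          gcongr; exact ih (k + 3) (by omega)
      _ = 8 * √π / exp 1 * √n ^ (k + 5) * (2 * n / exp 1) ^ n := by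
          rw [show √(n : ℝ) ^ (k + 5) = √n ^ (k + 3) * √n ^ 2 by ring,
            Real.sq_sqrt (Nat.cast_nonneg n)]
          ring

section CountVectors

variable {ι : Type*} [Fintype ι]

theorem pow_le_div_pow_mul_exp {p t : ℝ} (hp : 0 ≤ p) (ht : 0 < t) (c : ℕ) :
    p ^ c ≤ (c / t) ^ c * exp (t * p - c) := by
  rcases eq_or_ne c 0 with rfl | hc
  · simpa using one_le_exp (mul_nonneg ht.le hp)
  have hc' : (0 : ℝ) < c := by positivity
  have hstep : p ≤ c / t * exp (t * p / c - 1) :=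
    calc p = c / t * (t * p / c) := by field_simp
      _ ≤ c / t * exp (t * p / c - 1) := by
          gcongr; linarith [add_one_le_exp (t * p / c - 1)]
  calc p ^ c ≤ (c / t * exp (t * p / c - 1)) ^ c := by gcongr
    _ = (c / t) ^ c * exp (t * p - c) := by
        rw [mul_pow, ← exp_nat_mul]; congr 2; field_simp

theorem prod_pow_le_prod_div_pow {p : ι → ℝ} (hp0 : ∀ i, 0 ≤ p i) (hp1 : ∑ i, p i = 1)
    {c : ι → ℕ} {n : ℕ} (hc : ∑ i, c i = n) (hn : n ≠ 0) :
    ∏ i, p i ^ c i ≤ ∏ i, ((c i : ℝ) / n) ^ c i := by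
  have hexp : ∑ i, ((n : ℝ) * p i - c i) = 0 := by
    rw [sum_sub_distrib, ← mul_sum, hp1, ← Nat.cast_sum, hc, mul_one, sub_self]
  calc ∏ i, p i ^ c i ≤ ∏ i, (((c i : ℝ) / n) ^ c i * exp (n * p i - c i)) :=
        prod_le_prod (fun i _ => pow_nonneg (hp0 i) _)
          fun i _ => pow_le_div_pow_mul_exp (hp0 i) (by positivity) (c i)
    _ = ∏ i, ((c i : ℝ) / n) ^ c i := by
        rw [prod_mul_distrib, ← exp_sum, hexp, exp_zero, mul_one]

theorem prod_div_pow_mul_pow {c : ι → ℕ} {n : ℕ} (hc : ∑ i, c i = n) (hn : n ≠ 0)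
    (r : ℝ) :
    (∏ i, ((c i : ℝ) / n) ^ c i) * (r * n) ^ n = ∏ i, (r * c i) ^ c i := by
  rw [← hc, ← prod_pow_eq_pow_sum, ← prod_mul_distrib, hc]
  refine prod_congr rfl fun i _ => ?_
  rw [← mul_pow]
  congr 1
  field_simp

theorem mul_prod_pow_le_prod_oddProd {c : ι → ℕ} {i₀ : ι} (hi₀ : c i₀ ≠ 0) :
    2 * √π / exp 1 * ∏ i, (2 * c i / exp 1) ^ c i ≤ ∏ i, oddProd (c i) := by
  classical
  rw [← mul_prod_erase _ _ (mem_univ i₀), ← mul_prod_erase _ _ (mem_univ i₀), ← mul_assoc]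
  gcongr with i
  · exact (oddProd_pos _).le
  · exact le_oddProd hi₀
  · exact pow_le_oddProd _

end CountVectors

section KrichevskyTrofimov

variable {α : Type*} [DecidableEq α]

def letterCount {n : ℕ} (x : Fin n → α) (a : α) : ℕ := #{j | x j = a}

theorem sum_letterCount [Fintype α] {n : ℕ} (x : Fin n → α) : ∑ a, letterCount x a = n := by
  simp only [letterCount]
  rw [← card_eq_sum_card_fiberwise fun j _ => mem_univ (x j), card_univ, Fintype.card_fin]

theorem prod_comp_eq_prod_pow_letterCount [Fintype α] {M : Type*} [CommMonoid M] (f : α → M)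
    {n : ℕ} (x : Fin n → α) : ∏ j, f (x j) = ∏ a, f a ^ letterCount x a := by
  rw [← prod_fiberwise' univ x f]
  simp only [prod_const, letterCount]

theorem letterCount_cons {n : ℕ} (a : α) (y : Fin n → α) (b : α) :
    letterCount (Fin.cons a y : Fin (n + 1) → α) b =
      letterCount y b + if a = b then 1 else 0 := by
  rw [letterCount, Fin.card_filter_univ_succ']
  simp only [Fin.cons_zero, Fin.cons_succ, letterCount, add_comm]

theorem prod_oddProd_letterCount_cons [Fintype α] {n : ℕ} (a : α) (y : Fin n → α) :
    ∏ b, oddProd (letterCount (Fin.cons a y : Fin (n + 1) → α) b) =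
      (2 * letterCount y a + 1) * ∏ b, oddProd (letterCount y b) := by
  have h : ∀ b, oddProd (letterCount (Fin.cons a y : Fin (n + 1) → α) b) =
      oddProd (letterCount y b) * if a = b then 2 * (letterCount y b : ℝ) + 1 else 1 := by
    intro b
    rw [letterCount_cons]
    split_ifs <;> simp [oddProd_succ]
  rw [prod_congr rfl fun b _ => h b, prod_mul_distrib, prod_ite_eq, if_pos (mem_univ a), mul_comm]

/- Pólya's urn: appending the letter `a` to `y` multiplies the weight by `2 c_a + 1`, and these
factors add up to `m + 2n` over the alphabet. -/
theorem sum_prod_oddProd_letterCount [Fintype α] (n : ℕ) :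
    ∑ x : Fin n → α, ∏ a, oddProd (letterCount x a) = ktNormalizer (Fintype.card α) n := by
  induction n with
  | zero => simp [letterCount, oddProd, ktNormalizer]
  | succ n ih =>
    rw [← (Fin.consEquiv fun _ => α).sum_comp, Fintype.sum_prod_type]
    simp only [Fin.consEquiv, Equiv.coe_fn_mk, prod_oddProd_letterCount_cons]
    rw [sum_comm]
    simp only [← sum_mul]
    have hcoef : ∀ y : Fin n → α,
        ∑ a, (2 * (letterCount y a : ℝ) + 1) = Fintype.card α + 2 * n := by
      intro y
      rw [sum_add_distrib, ← mul_sum, ← Nat.cast_sum, sum_letterCount, sum_const, card_univ,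
        nsmul_one]
      ring
    simp only [hcoef, ← mul_sum, ih, ktNormalizer, prod_range_succ]
    ring

/-- The Krichevsky–Trofimov mixture: the average of `P^n` over the Dirichlet(1/2, …, 1/2)
prior on `P`, in closed form. -/
def ktProb [Fintype α] (n : ℕ) (x : Fin n → α) : ℝ :=
  (∏ a, oddProd (letterCount x a)) / ktNormalizer (Fintype.card α) n

theorem isPmf_ktProb [Fintype α] [Nonempty α] (n : ℕ) : IsPmf (ktProb (α := α) n) := by
  have hK := ktNormalizer_pos (Fintype.card_ne_zero (α := α)) n
  have hsum : ∑ x, ktProb (α := α) n x = 1 := by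
    simp only [ktProb]
    rw [← sum_div, sum_prod_oddProd_letterCount, div_self hK.ne']
  exact ⟨fun x => div_nonneg (prod_nonneg fun a _ => (oddProd_pos _).le) hK.le,
    hsum ▸ hasSum_fintype _⟩

theorem prodPmf_le_ktProb [Fintype α] {k n : ℕ} (hα : Fintype.card α = k + 1) (hn : 2 ≤ n)
    {P : α → ℝ} (hP : IsPmf P) (x : Fin n → α) :
    prodPmf P n x ≤ 4 * √n ^ k * ktProb n x := by
  have hn0 : n ≠ 0 := by omega
  have hP1 : ∑ a, P a = 1 := (hasSum_fintype P).unique hP.2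
  have hc := sum_letterCount x
  have hK := ktNormalizer_pos (m := Fintype.card α) (by omega) n
  -- some letter occurs; its factor `2√π/e` from `le_oddProd` turns `8√π/e` into `4`
  have hx₀ : letterCount x (x ⟨0, by omega⟩) ≠ 0 :=
    card_ne_zero.mpr ⟨⟨0, by omega⟩, mem_filter.mpr ⟨mem_univ _, rfl⟩⟩
  have hodd := mul_prod_pow_le_prod_oddProd hx₀
  have hcomm : ∀ a, 2 * (letterCount x a : ℝ) / exp 1 = 2 / exp 1 * letterCount x a :=
    fun a => mul_div_right_comm _ _ _
  simp only [hcomm] at hodd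
  rw [ktProb, mul_div_assoc', le_div_iff₀ hK, prodPmf, prod_comp_eq_prod_pow_letterCount]
  calc (∏ a, P a ^ letterCount x a) * ktNormalizer (Fintype.card α) n
      ≤ (∏ a, ((letterCount x a : ℝ) / n) ^ letterCount x a) *
          (8 * √π / exp 1 * √n ^ k * (2 * n / exp 1) ^ n) :=
        mul_le_mul (prod_pow_le_prod_div_pow hP.1 hP1 hc hn0)
          (hα ▸ ktNormalizer_succ_le k hn) hK.le (prod_nonneg fun a _ => by positivity)
    _ = 4 * √n ^ k * (2 * √π / exp 1 *
          ((∏ a, ((letterCount x a : ℝ) / n) ^ letterCount x a) * (2 / exp 1 * n) ^ n)) := by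
        rw [mul_div_right_comm (2 : ℝ)]; ring
    _ ≤ 4 * √n ^ k * ∏ a, oddProd (letterCount x a) := by
        rw [prod_div_pow_mul_pow hc hn0]
        exact mul_le_mul_of_nonneg_left hodd (by positivity)

end KrichevskyTrofimov

theorem regretTerm_le_of_le_mul {a b K : ℝ} (hb : 0 ≤ b) (h : a ≤ K * b) :
    regretTerm a b ≤ ENNReal.ofReal (logb 2 K) := by
  unfold regretTerm
  split_ifs with ha hb'
  · exact zero_le
  · have : b = 0 := le_antisymm hb' hb
    simp only [this, mul_zero] at h
    exact absurd h ha
  · rw [not_le] at ha hb'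
    exact ENNReal.ofReal_le_ofReal
      (logb_le_logb_of_le one_lt_two (div_pos ha hb') ((div_le_iff₀ hb').mpr h))

theorem minimaxRegret_le_of_le_mul {α : Type*} {Λ : Set (α → ℝ)} {n : ℕ}
    {Q : (Fin n → α) → ℝ} (hQ : IsPmf Q) {K : ℝ}
    (h : ∀ x, ∀ P ∈ Λ, prodPmf P n x ≤ K * Q x) :
    minimaxRegret Λ n ≤ ENNReal.ofReal (logb 2 K) :=
  (iInf₂_le Q hQ).trans <| iSup_le fun x => iSup₂_le fun P hP =>
    regretTerm_le_of_le_mul (hQ.1 x) (h x P hP)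

theorem logb_two_four_mul_sqrt_pow {n : ℝ} (hn : 0 < n) (k : ℕ) :
    logb 2 (4 * √n ^ k) = k / 2 * logb 2 n + 2 := by
  have h4 : logb 2 4 = 2 := by
    rw [show (4 : ℝ) = 2 ^ (2 : ℕ) by norm_num, logb_pow, logb_self_eq_one one_lt_two]; norm_num
  rw [logb_mul (by norm_num) (by positivity), logb_pow, h4, Real.sqrt_eq_rpow,
    logb_rpow_eq_mul_logb_of_pos hn]
  ring

/-- the minimax regret of the class of all memoryless sources on an
`m`-letter alphabet is at most `((m-1)/2) log n + 2` for `n ≥ 2`. -/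
theorem stmt19 (m : ℕ) (hm : 1 ≤ m) (n : ℕ) (hn : 2 ≤ n) :
    minimaxRegret {P : Fin m → ℝ | IsPmf P} n ≤
      ENNReal.ofReal (((m : ℝ) - 1) / 2 * Real.logb 2 (n : ℝ) + 2) := by
  obtain ⟨k, rfl⟩ := Nat.exists_eq_add_of_le' hm
  have : Nonempty (Fin (k + 1)) := ⟨0⟩
  refine (minimaxRegret_le_of_le_mul (isPmf_ktProb n) fun x P hP =>
    prodPmf_le_ktProb (Fintype.card_fin _) hn hP x).trans_eq ?_
  rw [logb_two_four_mul_sqrt_pow (by positivity), Nat.cast_add_one, add_sub_cancel_right]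
end
end
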